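/- arXiv:2010.06380 — 7 statements merged into one kernel-verified Lean document; each statement's English description precedes it below -/
import Mathlib

section
/- If f(X) and g(X) are real polynomials with nonnegative coefficients whose coefficient sequences are log-concave (with no internal zeros), then the coefficient sequence of the product f(X)g(X) is log-concave with nonnegative coefficients. -/
open Finset

lemma slc_aux (a : ℤ → ℝ) (h0 : ∀ i, 0 ≤ a i)
    (hlc : ∀ i : ℤ, a (i - 1) * a (i + 1) ≤ a i ^ 2)
    (hni : ∀ i j k : ℤ, i ≤ j → j ≤ k → a i ≠ 0 → a k ≠ 0 → a j ≠ 0) :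
    ∀ i j : ℤ, i ≤ j → a (i - 1) * a (j + 1) ≤ a i * a j := by
  have key : ∀ d : ℕ, ∀ i j : ℤ, j = i + d → a (i - 1) ≠ 0 → a (j + 1) ≠ 0 →
      a (i - 1) * a (j + 1) ≤ a i * a j := by
    intro d
    induction d with
    | zero =>
      intro i j hj _ _
      have hj2 : j = i := by push_cast at hj; omega
      rw [hj2]
      simpa [sq] using hlc i
    | succ d IH =>
      intro i j hj h1 h2
      have hj2 : j = i + (d : ℤ) + 1 := by push_cast at hj; omega
      subst hj2
      rw [show i + (d:ℤ) + 1 + 1 = i + d + 2 by ring] at h2 ⊢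
      have hni1 : a (i + d + 1) ≠ 0 :=
        hni (i - 1) (i + d + 1) (i + d + 2) (by omega) (by omega) h1 h2
      have hni0 : a (i + d) ≠ 0 :=
        hni (i - 1) (i + d) (i + d + 2) (by omega) (by omega) h1 h2
      have IH' := IH i (i + d) rfl h1 hni1
      have L2 := hlc (i + d + 1)
      rw [show i + (d:ℤ) + 1 - 1 = i + d by ring, show i + (d:ℤ) + 1 + 1 = i + d + 2 by ring] at L2
      have hp0 : 0 < a (i + d) := lt_of_le_of_ne (h0 _) (Ne.symm hni0)
      have hp1 : 0 < a (i + d + 1) := lt_of_le_of_ne (h0 _) (Ne.symm hni1)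
      have hcomb := mul_le_mul IH' L2 (mul_nonneg (h0 _) (h0 _)) (mul_nonneg (h0 _) (h0 _))
      have hgoal' : a (i - 1) * a (i + d + 2) * (a (i + d + 1) * a (i + d)) ≤
          a i * a (i + d + 1) * (a (i + d + 1) * a (i + d)) := by nlinarith [hcomb]
      exact le_of_mul_le_mul_right hgoal' (mul_pos hp1 hp0)
  intro i j hij
  by_cases h1 : a (i - 1) = 0
  · rw [h1, zero_mul]; exact mul_nonneg (h0 i) (h0 j)
  by_cases h2 : a (j + 1) = 0
  · rw [h2, mul_zero]; exact mul_nonneg (h0 i) (h0 j)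
  exact key (j - i).toNat i j (by omega) h1 h2

noncomputable def extC (f : Polynomial ℝ) : ℤ → ℝ := fun i => if 0 ≤ i then f.coeff i.toNat else 0

lemma extC_neg (f : Polynomial ℝ) (i : ℤ) (hi : i < 0) : extC f i = 0 := by
  simp [extC, not_le.mpr hi]

lemma extC_nonneg (f : Polynomial ℝ) (hf0 : ∀ k, 0 ≤ f.coeff k) (i : ℤ) : 0 ≤ extC f i := by
  unfold extC; split <;> simp [hf0]

lemma extC_nat (f : Polynomial ℝ) (k : ℕ) : extC f (k : ℤ) = f.coeff k := by
  simp [extC]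

lemma extC_lc (f : Polynomial ℝ) (hf0 : ∀ k, 0 ≤ f.coeff k)
    (hflc : ∀ k, 1 ≤ k → f.coeff (k - 1) * f.coeff (k + 1) ≤ f.coeff k ^ 2) :
    ∀ i : ℤ, extC f (i - 1) * extC f (i + 1) ≤ extC f i ^ 2 := by
  intro i
  rcases le_or_gt i 0 with hi | hi
  · rw [extC_neg f _ (by omega), zero_mul]; positivity
  · have h1 : extC f (i - 1) = f.coeff (i.toNat - 1) := by
      simp only [extC, if_pos (by omega : (0:ℤ) ≤ i - 1)]
      congr 1; omega
    have h2 : extC f (i + 1) = f.coeff (i.toNat + 1) := by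
      simp only [extC, if_pos (by omega : (0:ℤ) ≤ i + 1)]
      congr 1; omega
    have h3 : extC f i = f.coeff i.toNat := by
      simp only [extC, if_pos (by omega : (0:ℤ) ≤ i)]
    rw [h1, h2, h3]
    exact hflc i.toNat (by omega)

lemma extC_ni (f : Polynomial ℝ)
    (hfni : ∀ i j k, i ≤ j → j ≤ k → f.coeff i ≠ 0 → f.coeff k ≠ 0 → f.coeff j ≠ 0) :
    ∀ i j k : ℤ, i ≤ j → j ≤ k → extC f i ≠ 0 → extC f k ≠ 0 → extC f j ≠ 0 := by
  intro i j k hij hjk hi hk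
  have hi0 : 0 ≤ i := by
    by_contra h
    exact hi (extC_neg f i (by omega))
  have hj0 : 0 ≤ j := le_trans hi0 hij
  have hk0 : 0 ≤ k := le_trans hj0 hjk
  simp only [extC, if_pos hi0, if_pos hj0, if_pos hk0] at hi hk ⊢
  exact hfni i.toNat j.toNat k.toNat (by omega) (by omega) hi hk

lemma conv_coeff (f g : Polynomial ℝ) (m : ℕ) (s : Finset ℤ)
    (hs : Finset.Icc (0 : ℤ) m ⊆ s) :
    (f * g).coeff m = ∑ i ∈ s, extC f i * extC g (m - i) := by
  rw [Polynomial.coeff_mul, Finset.Nat.sum_antidiagonal_eq_sum_range_succ_mk]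
  have h1 : ∑ k ∈ Finset.range (m + 1), f.coeff k * g.coeff (m - k)
      = ∑ i ∈ Finset.Icc (0 : ℤ) m, extC f i * extC g (m - i) := by
    apply Finset.sum_nbij' (fun k : ℕ => (k : ℤ)) (fun i : ℤ => i.toNat)
    · intro k hk; simp only [Finset.mem_range] at hk; simp only [Finset.mem_Icc]; omega
    · intro i hi; simp only [Finset.mem_Icc] at hi; simp only [Finset.mem_range]; omega
    · intro k _; simp
    · intro i hi; simp only [Finset.mem_Icc] at hi; omega
    · intro k hk
      simp only [Finset.mem_range] at hk
      rw [extC_nat]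
      congr 1
      simp only [extC, if_pos (by omega : (0:ℤ) ≤ (m : ℤ) - (k : ℤ))]
      congr 1; omega
  rw [h1]
  apply Finset.sum_subset hs
  intro i hi hnot
  rcases lt_or_ge i 0 with h | h
  · rw [extC_neg f i h, zero_mul]
  · have : (m : ℤ) < i := by
      by_contra hc
      exact hnot (Finset.mem_Icc.mpr ⟨h, by omega⟩)
    rw [extC_neg g _ (by omega), mul_zero]

noncomputable def lcU (a b : ℤ → ℝ) (n : ℤ) (x : ℤ × ℤ) : ℝ :=
  a x.1 * b (n - x.1) * (a x.2 * b (n - x.2))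

noncomputable def lcV (a b : ℤ → ℝ) (n : ℤ) (x : ℤ × ℤ) : ℝ :=
  a x.1 * b (n - 1 - x.1) * (a x.2 * b (n + 1 - x.2))

lemma sum_swap_filter (w : ℤ × ℤ → ℝ) (I : Finset ℤ) (hw : ∀ x : ℤ × ℤ, w (x.2, x.1) = w x) :
    ∑ x ∈ (I ×ˢ I).filter (fun x => ¬ x.1 ≤ x.2), w x
      = ∑ x ∈ (I ×ˢ I).filter (fun x => x.1 < x.2), w x := by
  apply Finset.sum_nbij' Prod.swap Prod.swap
  · intro x hx
    simp only [Finset.mem_filter, Finset.mem_product] at hx ⊢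
    exact ⟨⟨hx.1.2, hx.1.1⟩, by have := hx.2; simp only [Prod.fst_swap, Prod.snd_swap]; omega⟩
  · intro x hx
    simp only [Finset.mem_filter, Finset.mem_product] at hx ⊢
    exact ⟨⟨hx.1.2, hx.1.1⟩, by have := hx.2; simp only [Prod.fst_swap, Prod.snd_swap]; omega⟩
  · intro x _; simp
  · intro x _; simp
  · intro x _; exact (hw x).symm

lemma sum_shift (w : ℤ × ℤ → ℝ) (n : ℤ) :
    ∑ x ∈ ((Finset.Icc (-1 : ℤ) (n + 1)) ×ˢ (Finset.Icc (-1 : ℤ) (n + 1))).filter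
        (fun x => x.1 ≤ x.2), w (x.1 - 1, x.2 + 1)
      = ∑ x ∈ ((Finset.Icc (-2 : ℤ) n) ×ˢ (Finset.Icc (0 : ℤ) (n + 2))).filter
        (fun x => x.1 + 2 ≤ x.2), w x := by
  apply Finset.sum_nbij' (fun x : ℤ × ℤ => (x.1 - 1, x.2 + 1)) (fun x : ℤ × ℤ => (x.1 + 1, x.2 - 1))
  · intro x hx
    simp only [Finset.mem_filter, Finset.mem_product, Finset.mem_Icc] at hx ⊢
    omega
  · intro x hx
    simp only [Finset.mem_filter, Finset.mem_product, Finset.mem_Icc] at hx ⊢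
    omega
  · intro x _; simp
  · intro x _; simp
  · intro x _; rfl

lemma sum_core (w : ℤ × ℤ → ℝ) (S1 S2 p q r s : ℤ)
    (hw : ∀ x : ℤ × ℤ, x.1 < 0 ∨ S1 < x.1 ∨ x.2 < 0 ∨ S2 < x.2 → w x = 0)
    (hp : p ≤ 0) (hq : S1 ≤ q) (hr : r ≤ 0) (hs : S2 ≤ s) :
    ∑ x ∈ ((Finset.Icc p q) ×ˢ (Finset.Icc r s)).filter (fun x => x.1 + 2 ≤ x.2), w x
      = ∑ x ∈ ((Finset.Icc (0:ℤ) S1) ×ˢ (Finset.Icc (0:ℤ) S2)).filter (fun x => x.1 + 2 ≤ x.2), w x := by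
  apply (Finset.sum_subset ?_ ?_).symm
  · intro x hx
    simp only [Finset.mem_filter, Finset.mem_product, Finset.mem_Icc] at hx ⊢
    omega
  · intro x hx hnx
    simp only [Finset.mem_filter, Finset.mem_product, Finset.mem_Icc] at hx hnx
    exact hw x (by omega)

lemma sum_split (w : ℤ × ℤ → ℝ) (E : Finset (ℤ × ℤ)) :
    ∑ x ∈ E.filter (fun x => x.1 < x.2), w x
      = ∑ x ∈ E.filter (fun x => x.2 = x.1 + 1), w x
        + ∑ x ∈ E.filter (fun x => x.1 + 2 ≤ x.2), w x := by
  rw [← Finset.sum_filter_add_sum_filter_not (E.filter (fun x => x.1 < x.2))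
      (fun x => x.2 = x.1 + 1) w]
  congr 1
  · apply Finset.sum_congr _ (fun _ _ => rfl)
    rw [Finset.filter_filter]
    exact Finset.filter_congr (fun x _ => by omega)
  · apply Finset.sum_congr _ (fun _ _ => rfl)
    rw [Finset.filter_filter]
    exact Finset.filter_congr (fun x _ => by omega)
lemma lc_identity (a b : ℤ → ℝ) (n : ℤ)
    (ha : ∀ i : ℤ, i < 0 → a i = 0) (hb : ∀ i : ℤ, i < 0 → b i = 0) :
    (∑ i ∈ Finset.Icc (-1 : ℤ) (n + 1), a i * b (n - i)) ^ 2
      - (∑ i ∈ Finset.Icc (-1 : ℤ) (n + 1), a i * b (n - 1 - i))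
        * (∑ i ∈ Finset.Icc (-1 : ℤ) (n + 1), a i * b (n + 1 - i))
    = ∑ x ∈ ((Finset.Icc (-1 : ℤ) (n + 1)) ×ˢ (Finset.Icc (-1 : ℤ) (n + 1))).filter
        (fun x => x.1 ≤ x.2),
        (a x.1 * a x.2 - a (x.1 - 1) * a (x.2 + 1)) *
          (b (n - x.2) * b (n - x.1) - b (n - x.2 - 1) * b (n - x.1 + 1)) := by
  set I : Finset ℤ := Finset.Icc (-1 : ℤ) (n + 1) with hI
  set E : Finset (ℤ × ℤ) := I ×ˢ I with hE
  -- support lemmas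
  have hUsupp : ∀ x : ℤ × ℤ, x.1 < 0 ∨ n < x.1 ∨ x.2 < 0 ∨ n < x.2 → lcU a b n x = 0 := by
    intro x hx
    unfold lcU
    rcases hx with h | h | h | h
    · rw [ha _ h]; ring
    · rw [hb (n - x.1) (by omega)]; ring
    · rw [ha _ h]; ring
    · rw [hb (n - x.2) (by omega)]; ring
  have hVsupp : ∀ x : ℤ × ℤ, x.1 < 0 ∨ n - 1 < x.1 ∨ x.2 < 0 ∨ n + 1 < x.2 → lcV a b n x = 0 := by
    intro x hx
    unfold lcV
    rcases hx with h | h | h | h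
    · rw [ha _ h]; ring
    · rw [hb (n - 1 - x.1) (by omega)]; ring
    · rw [ha _ h]; ring
    · rw [hb (n + 1 - x.2) (by omega)]; ring
  -- squares as double sums
  have e1 : (∑ i ∈ I, a i * b (n - i)) ^ 2 = ∑ x ∈ E, lcU a b n x := by
    rw [sq, Finset.sum_mul_sum, hE, Finset.sum_product]
    rfl
  have e2 : (∑ i ∈ I, a i * b (n - 1 - i)) * (∑ i ∈ I, a i * b (n + 1 - i))
      = ∑ x ∈ E, lcV a b n x := by
    rw [Finset.sum_mul_sum, hE, Finset.sum_product]
    rfl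
  -- expansion of the right-hand side
  have eT : ∑ x ∈ E.filter (fun x => x.1 ≤ x.2),
        (a x.1 * a x.2 - a (x.1 - 1) * a (x.2 + 1)) *
          (b (n - x.2) * b (n - x.1) - b (n - x.2 - 1) * b (n - x.1 + 1))
      = ∑ x ∈ E.filter (fun x => x.1 ≤ x.2), lcU a b n x
        - ∑ x ∈ E.filter (fun x => x.1 ≤ x.2), lcV a b n (x.2, x.1)
        - ∑ x ∈ E.filter (fun x => x.1 ≤ x.2), lcV a b n (x.1 - 1, x.2 + 1)
        + ∑ x ∈ E.filter (fun x => x.1 ≤ x.2), lcU a b n (x.1 - 1, x.2 + 1) := by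
    have step : ∑ x ∈ E.filter (fun x => x.1 ≤ x.2),
        (a x.1 * a x.2 - a (x.1 - 1) * a (x.2 + 1)) *
          (b (n - x.2) * b (n - x.1) - b (n - x.2 - 1) * b (n - x.1 + 1))
        = ∑ x ∈ E.filter (fun x => x.1 ≤ x.2),
          (lcU a b n x - lcV a b n (x.2, x.1) - lcV a b n (x.1 - 1, x.2 + 1)
            + lcU a b n (x.1 - 1, x.2 + 1)) := by
      apply Finset.sum_congr rfl
      intro x _
      simp only [lcU, lcV]
      rw [show n - 1 - x.2 = n - x.2 - 1 by ring, show n + 1 - x.1 = n - x.1 + 1 by ring,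
        show n - 1 - (x.1 - 1) = n - x.1 by ring, show n + 1 - (x.2 + 1) = n - x.2 by ring,
        show n - (x.1 - 1) = n - x.1 + 1 by ring, show n - (x.2 + 1) = n - x.2 - 1 by ring]
      ring
    rw [step, Finset.sum_add_distrib, Finset.sum_sub_distrib, Finset.sum_sub_distrib]
  -- reindexings
  have hB : ∑ x ∈ E.filter (fun x => x.1 ≤ x.2), lcV a b n (x.2, x.1)
      = ∑ x ∈ E.filter (fun x => x.2 ≤ x.1), lcV a b n x := by
    apply Finset.sum_nbij' Prod.swap Prod.swap
    · intro x hx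
      simp only [hE, Finset.mem_filter, Finset.mem_product] at hx ⊢
      exact ⟨⟨hx.1.2, hx.1.1⟩, hx.2⟩
    · intro x hx
      simp only [hE, Finset.mem_filter, Finset.mem_product] at hx ⊢
      exact ⟨⟨hx.1.2, hx.1.1⟩, hx.2⟩
    · intro x _; simp
    · intro x _; simp
    · intro x _; rfl
  have hC : ∑ x ∈ E.filter (fun x => x.1 ≤ x.2), lcV a b n (x.1 - 1, x.2 + 1)
      = ∑ x ∈ ((Finset.Icc (-2 : ℤ) n) ×ˢ (Finset.Icc (0 : ℤ) (n + 2))).filter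
          (fun x => x.1 + 2 ≤ x.2), lcV a b n x := sum_shift (lcV a b n) n
  have hD : ∑ x ∈ E.filter (fun x => x.1 ≤ x.2), lcU a b n (x.1 - 1, x.2 + 1)
      = ∑ x ∈ ((Finset.Icc (-2 : ℤ) n) ×ˢ (Finset.Icc (0 : ℤ) (n + 2))).filter
          (fun x => x.1 + 2 ≤ x.2), lcU a b n x := sum_shift (lcU a b n) n
  -- splitting ΣE U
  have hU1 : ∑ x ∈ E, lcU a b n x
      = ∑ x ∈ E.filter (fun x => x.1 ≤ x.2), lcU a b n x
        + ∑ x ∈ E.filter (fun x => ¬ x.1 ≤ x.2), lcU a b n x :=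
    (Finset.sum_filter_add_sum_filter_not E _ _).symm
  have hU2 : ∑ x ∈ E.filter (fun x => ¬ x.1 ≤ x.2), lcU a b n x
      = ∑ x ∈ E.filter (fun x => x.1 < x.2), lcU a b n x :=
    sum_swap_filter (lcU a b n) I (by intro x; simp only [lcU]; ring)
  have hU3 : ∑ x ∈ E.filter (fun x => x.1 < x.2), lcU a b n x
      = ∑ x ∈ E.filter (fun x => x.2 = x.1 + 1), lcU a b n x
        + ∑ x ∈ E.filter (fun x => x.1 + 2 ≤ x.2), lcU a b n x := sum_split _ _
  have hU4 : ∑ x ∈ E.filter (fun x => x.1 + 2 ≤ x.2), lcU a b n x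
      = ∑ x ∈ ((Finset.Icc (-2 : ℤ) n) ×ˢ (Finset.Icc (0 : ℤ) (n + 2))).filter
          (fun x => x.1 + 2 ≤ x.2), lcU a b n x := by
    rw [sum_core (lcU a b n) n n (-1) (n+1) (-1) (n+1) hUsupp (by omega) (by omega) (by omega) (by omega),
      sum_core (lcU a b n) n n (-2) n 0 (n+2) hUsupp (by omega) (by omega) (by omega) (by omega)]
  -- splitting ΣE V
  have hV1 : ∑ x ∈ E, lcV a b n x
      = ∑ x ∈ E.filter (fun x => x.2 ≤ x.1), lcV a b n x
        + ∑ x ∈ E.filter (fun x => ¬ x.2 ≤ x.1), lcV a b n x :=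
    (Finset.sum_filter_add_sum_filter_not E _ _).symm
  have hV2 : ∑ x ∈ E.filter (fun x => ¬ x.2 ≤ x.1), lcV a b n x
      = ∑ x ∈ E.filter (fun x => x.1 < x.2), lcV a b n x := by
    apply Finset.sum_congr _ (fun _ _ => rfl)
    exact Finset.filter_congr (fun x _ => by omega)
  have hV3 : ∑ x ∈ E.filter (fun x => x.1 < x.2), lcV a b n x
      = ∑ x ∈ E.filter (fun x => x.2 = x.1 + 1), lcV a b n x
        + ∑ x ∈ E.filter (fun x => x.1 + 2 ≤ x.2), lcV a b n x := sum_split _ _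
  have hV4 : ∑ x ∈ E.filter (fun x => x.1 + 2 ≤ x.2), lcV a b n x
      = ∑ x ∈ ((Finset.Icc (-2 : ℤ) n) ×ˢ (Finset.Icc (0 : ℤ) (n + 2))).filter
          (fun x => x.1 + 2 ≤ x.2), lcV a b n x := by
    rw [sum_core (lcV a b n) (n-1) (n+1) (-1) (n+1) (-1) (n+1) hVsupp (by omega) (by omega) (by omega) (by omega),
      sum_core (lcV a b n) (n-1) (n+1) (-2) n 0 (n+2) hVsupp (by omega) (by omega) (by omega) (by omega)]
  -- the diagonal terms agree
  have hdiag : ∑ x ∈ E.filter (fun x => x.2 = x.1 + 1), lcU a b n x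
      = ∑ x ∈ E.filter (fun x => x.2 = x.1 + 1), lcV a b n x := by
    apply Finset.sum_congr rfl
    intro x hx
    have hx2 : x.2 = x.1 + 1 := (Finset.mem_filter.mp hx).2
    simp only [lcU, lcV, hx2]
    rw [show n - (x.1 + 1) = n - 1 - x.1 by ring, show n + 1 - (x.1 + 1) = n - x.1 by ring]
    ring
  rw [e1, e2, eT]
  linarith [hU1, hU2, hU3, hU4, hV1, hV2, hV3, hV4, hdiag, hB, hC, hD]

theorem logConcave_mul (f g : Polynomial ℝ)
    (hf0 : ∀ k, 0 ≤ f.coeff k) (hg0 : ∀ k, 0 ≤ g.coeff k)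
    (hflc : ∀ k, 1 ≤ k → f.coeff (k - 1) * f.coeff (k + 1) ≤ f.coeff k ^ 2)
    (hglc : ∀ k, 1 ≤ k → g.coeff (k - 1) * g.coeff (k + 1) ≤ g.coeff k ^ 2)
    (hfni : ∀ i j k, i ≤ j → j ≤ k → f.coeff i ≠ 0 → f.coeff k ≠ 0 → f.coeff j ≠ 0)
    (hgni : ∀ i j k, i ≤ j → j ≤ k → g.coeff i ≠ 0 → g.coeff k ≠ 0 → g.coeff j ≠ 0) :
    (∀ k, 0 ≤ (f * g).coeff k) ∧
      (∀ k, 1 ≤ k → (f * g).coeff (k - 1) * (f * g).coeff (k + 1) ≤ (f * g).coeff k ^ 2) := by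
  refine ⟨?_, ?_⟩
  · intro k
    rw [Polynomial.coeff_mul]
    exact Finset.sum_nonneg fun x _ => mul_nonneg (hf0 _) (hg0 _)
  · intro k hk
    have ha : ∀ i : ℤ, i < 0 → extC f i = 0 := fun i hi => extC_neg f i hi
    have hb : ∀ i : ℤ, i < 0 → extC g i = 0 := fun i hi => extC_neg g i hi
    have hA0 := extC_nonneg f hf0
    have hB0 := extC_nonneg g hg0
    have SA := slc_aux (extC f) hA0 (extC_lc f hf0 hflc) (extC_ni f hfni)
    have SB := slc_aux (extC g) hB0 (extC_lc g hg0 hglc) (extC_ni g hgni)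
    have hck : (f * g).coeff k
        = ∑ i ∈ Finset.Icc (-1 : ℤ) ((k : ℤ) + 1), extC f i * extC g ((k : ℤ) - i) := by
      rw [conv_coeff f g k (Finset.Icc (-1 : ℤ) ((k : ℤ) + 1))
        (by intro x hx; simp only [Finset.mem_Icc] at hx ⊢; omega)]
    have hckm : (f * g).coeff (k - 1)
        = ∑ i ∈ Finset.Icc (-1 : ℤ) ((k : ℤ) + 1), extC f i * extC g ((k : ℤ) - 1 - i) := by
      rw [conv_coeff f g (k - 1) (Finset.Icc (-1 : ℤ) ((k : ℤ) + 1))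
        (by intro x hx; simp only [Finset.mem_Icc] at hx ⊢; omega)]
      apply Finset.sum_congr rfl
      intro i _
      congr 1
      congr 1
      omega
    have hckp : (f * g).coeff (k + 1)
        = ∑ i ∈ Finset.Icc (-1 : ℤ) ((k : ℤ) + 1), extC f i * extC g ((k : ℤ) + 1 - i) := by
      rw [conv_coeff f g (k + 1) (Finset.Icc (-1 : ℤ) ((k : ℤ) + 1))
        (by intro x hx; simp only [Finset.mem_Icc] at hx ⊢; omega)]
      apply Finset.sum_congr rfl
      intro i _
      congr 1
    have hid := lc_identity (extC f) (extC g) (k : ℤ) ha hb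
    have hT : 0 ≤ ∑ x ∈ ((Finset.Icc (-1 : ℤ) ((k : ℤ) + 1)) ×ˢ
          (Finset.Icc (-1 : ℤ) ((k : ℤ) + 1))).filter (fun x => x.1 ≤ x.2),
        (extC f x.1 * extC f x.2 - extC f (x.1 - 1) * extC f (x.2 + 1)) *
          (extC g ((k : ℤ) - x.2) * extC g ((k : ℤ) - x.1)
            - extC g ((k : ℤ) - x.2 - 1) * extC g ((k : ℤ) - x.1 + 1)) := by
      apply Finset.sum_nonneg
      intro x hx
      have hle : x.1 ≤ x.2 := (Finset.mem_filter.mp hx).2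
      exact mul_nonneg (sub_nonneg.mpr (SA x.1 x.2 hle))
        (sub_nonneg.mpr (SB ((k : ℤ) - x.2) ((k : ℤ) - x.1) (by omega)))
    rw [hck, hckm, hckp]
    linarith [hid, hT]
end

section
/- If a real polynomial f with nonnegative coefficients has all of its complex roots real, then its coefficient sequence is log-concave: a_k^2 ≥ a_{k-1} a_{k+1} for all valid k. -/
/-!
Every complex root of `f` is real, so `f = c ∏ (X - aᵢ)` over `ℝ`; since the coefficients are
nonnegative, `f` is positive on `(0, ∞)`, so `c ≥ 0` and every `aᵢ ≤ 0`. Log-concavity together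
with the absence of internal zeros, in the two-index form `aᵢ a_{j+2} ≤ a_{i+1} a_{j+1}` for
`i ≤ j`, holds for constants and is preserved by multiplication by `X - a` with `a ≤ 0`: each
of the three terms of the expanded inequality is one instance (or a chain of two) of the
hypothesis.
-/

open Polynomial

namespace Polynomial

section Semiring

variable {R : Type*} [CommSemiring R] [Preorder R]

def CoeffLogConcave (p : R[X]) : Prop :=
  (∀ k, 0 ≤ p.coeff k) ∧
    ∀ i j, i ≤ j → p.coeff i * p.coeff (j + 2) ≤ p.coeff (i + 1) * p.coeff (j + 1)

theorem coeffLogConcave_C {c : R} (hc : 0 ≤ c) : CoeffLogConcave (C c) := by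
  refine ⟨fun k => ?_, fun i j _ => ?_⟩
  · rw [coeff_C]; split_ifs <;> simp [hc]
  · simp [coeff_C]

theorem CoeffLogConcave.coeff_mul_coeff_add_three_le {p : R[X]} (hp : CoeffLogConcave p)
    {i j : ℕ} (hij : i ≤ j) :
    p.coeff i * p.coeff (j + 3) ≤ p.coeff (i + 2) * p.coeff (j + 1) := by
  have h₁ : p.coeff i * p.coeff (j + 3) ≤ p.coeff (i + 1) * p.coeff (j + 2) :=
    hp.2 i (j + 1) (by omega)
  have h₂ : p.coeff (i + 1) * p.coeff (j + 2) ≤ p.coeff (i + 2) * p.coeff (j + 1) := by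
    rcases hij.eq_or_lt with rfl | hlt
    · rw [mul_comm]
    · exact hp.2 (i + 1) j hlt
  exact h₁.trans h₂

end Semiring

section OrderedRing

variable {R : Type*} [CommRing R] [LinearOrder R] [IsStrictOrderedRing R]

theorem eval_pos_of_coeff_nonneg {p : R[X]} (hp : ∀ k, 0 ≤ p.coeff k) (hp0 : p ≠ 0) {x : R}
    (hx : 0 < x) : 0 < p.eval x := by
  rw [eval_eq_sum_range]
  refine Finset.sum_pos' (fun i _ => mul_nonneg (hp i) (pow_nonneg hx.le i))
    ⟨p.natDegree, Finset.self_mem_range_succ _, mul_pos ?_ (pow_pos hx _)⟩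
  exact (hp _).lt_of_ne' (leadingCoeff_ne_zero.mpr hp0)

theorem nonpos_of_mem_roots_of_coeff_nonneg {p : R[X]} (hp : ∀ k, 0 ≤ p.coeff k)
    {a : R} (ha : a ∈ p.roots) : a ≤ 0 := by
  by_contra! hpos
  have hp0 : p ≠ 0 := ne_zero_of_mem_roots ha
  exact (eval_pos_of_coeff_nonneg hp hp0 hpos).ne' (isRoot_of_mem_roots ha)

namespace CoeffLogConcave

variable {p : R[X]}

theorem X_sub_C_mul (hp : CoeffLogConcave p) {a : R} (ha : a ≤ 0) :
    CoeffLogConcave ((X - C a) * p) := by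
  have hzero : ((X - C a) * p).coeff 0 = -a * p.coeff 0 := by simp [sub_mul]
  have hsucc (n : ℕ) : ((X - C a) * p).coeff (n + 1) = p.coeff n + -a * p.coeff (n + 1) := by
    rw [coeff_X_sub_C_mul]; ring
  have hb : 0 ≤ -a := neg_nonneg.mpr ha
  refine ⟨fun k => ?_, fun i j hij => ?_⟩
  · rcases k with _ | k
    · rw [hzero]; exact mul_nonneg hb (hp.1 0)
    · rw [hsucc]; exact add_nonneg (hp.1 k) (mul_nonneg hb (hp.1 (k + 1)))
  rcases i with _ | i
  · rw [hzero, hsucc, hsucc, hsucc]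
    nlinarith [mul_le_mul_of_nonneg_left (hp.2 0 j (Nat.zero_le j)) (mul_nonneg hb hb),
      mul_nonneg (hp.1 0) (hp.1 j), mul_nonneg hb (mul_nonneg (hp.1 1) (hp.1 j))]
  obtain ⟨j, rfl⟩ : ∃ j', j = j' + 1 := ⟨j - 1, by omega⟩
  rw [hsucc, hsucc, hsucc, hsucc]
  nlinarith [hp.2 i j (by omega),
    mul_le_mul_of_nonneg_left (hp.2 (i + 1) (j + 1) (by omega)) (mul_nonneg hb hb),
    mul_le_mul_of_nonneg_left (hp.coeff_mul_coeff_add_three_le (i := i) (j := j) (by omega)) hb]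

end CoeffLogConcave

theorem coeffLogConcave_C_mul_prod_X_sub_C {c : R} (hc : 0 ≤ c) {s : Multiset R}
    (hs : ∀ a ∈ s, a ≤ 0) : CoeffLogConcave (C c * (s.map (X - C ·)).prod) := by
  induction s using Multiset.induction_on with
  | empty => simpa using coeffLogConcave_C hc
  | cons a s ih =>
    rw [Multiset.map_cons, Multiset.prod_cons, mul_left_comm]
    exact (ih fun b hb => hs b (Multiset.mem_cons_of_mem hb)).X_sub_C_mul
      (hs a (Multiset.mem_cons_self a s))

end OrderedRing

theorem splits_of_forall_isRoot_im_eq_zero {f : ℝ[X]}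
    (hrr : ∀ z : ℂ, (f.map (algebraMap ℝ ℂ)).IsRoot z → z.im = 0) : f.Splits :=
  Splits.of_splits_map_of_injective (algebraMap ℝ ℂ).injective (IsAlgClosed.splits _)
    fun z hz => ⟨z.re, Complex.ext rfl (hrr z (isRoot_of_mem_roots hz)).symm⟩

end Polynomial

theorem newton_logConcave (f : Polynomial ℝ)
    (h0 : ∀ k, 0 ≤ f.coeff k)
    (hrr : ∀ z : ℂ, (f.map (algebraMap ℝ ℂ)).IsRoot z → z.im = 0) :
    ∀ k, 1 ≤ k → f.coeff (k - 1) * f.coeff (k + 1) ≤ f.coeff k ^ 2 := by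
  intro k hk
  obtain ⟨m, rfl⟩ : ∃ m, k = m + 1 := ⟨k - 1, by omega⟩
  have hf : CoeffLogConcave f := by
    rw [(splits_of_forall_isRoot_im_eq_zero hrr).eq_prod_roots]
    exact coeffLogConcave_C_mul_prod_X_sub_C (h0 _)
      fun a ha => nonpos_of_mem_roots_of_coeff_nonneg h0 ha
  simpa [sq] using hf.2 m m le_rfl
end

section
/- If a real polynomial with nonnegative coefficients is real-rooted, then its coefficient sequence is unimodal. -/
/-!
A nonnegative real-rooted polynomial has no positive roots, so it is `c * ∏ (X - rᵢ)` with
`c ≥ 0` and all `rᵢ ≤ 0`. Its coefficient sequence is then a Pólya frequency sequence of order two,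
since that property survives multiplication by `X - r` for `r ≤ 0`; and a finite sequence of this
kind is unimodal.
-/

open Polynomial

/-- Pólya frequency of order two: a nonnegative, log-concave sequence without internal zeros. -/
structure IsPF2 {R : Type*} [CommRing R] [LinearOrder R] (a : ℕ → R) : Prop where
  nonneg : ∀ k, 0 ≤ a k
  outer_le_inner : ∀ i j, i ≤ j → a i * a (j + 2) ≤ a (i + 1) * a (j + 1)

namespace IsPF2

variable {R : Type*} [CommRing R] [LinearOrder R]

lemma outer_le_inner_two {a : ℕ → R} (ha : IsPF2 a) {i j : ℕ} (hij : i ≤ j) :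
    a i * a (j + 3) ≤ a (i + 2) * a (j + 1) := by
  calc a i * a (j + 3) ≤ a (i + 1) * a (j + 2) := ha.outer_le_inner i (j + 1) (by omega)
    _ ≤ a (i + 2) * a (j + 1) := by
      rcases hij.eq_or_lt with rfl | hlt
      · rw [mul_comm]
      · exact ha.outer_le_inner (i + 1) j hlt

variable [IsStrictOrderedRing R]

lemma coeff_C {c : R} (hc : 0 ≤ c) : IsPF2 (C c).coeff := by
  have hnn (k : ℕ) : 0 ≤ (C c).coeff k := by
    rw [Polynomial.coeff_C]
    split_ifs
    exacts [hc, le_rfl]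
  refine ⟨hnn, fun i j _ => ?_⟩
  rw [coeff_C_of_ne_zero (n := j + 2) (by omega), mul_zero]
  exact mul_nonneg (hnn _) (hnn _)

lemma coeff_mul_X_sub_C {p : R[X]} (hp : IsPF2 p.coeff) {r : R} (hr : r ≤ 0) :
    IsPF2 (p * (X - C r)).coeff := by
  have hs : 0 ≤ -r := neg_nonneg.2 hr
  have h0 : (p * (X - C r)).coeff 0 = -r * p.coeff 0 := by simp [mul_comm]
  refine ⟨fun k => ?_, fun i j hij => ?_⟩
  · rcases k with _ | k
    · rw [h0]
      exact mul_nonneg hs (hp.nonneg 0)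
    · rw [Polynomial.coeff_mul_X_sub_C]
      linear_combination hp.nonneg k + mul_nonneg hs (hp.nonneg (k + 1))
  rcases i with _ | i
  · simp only [h0, Polynomial.coeff_mul_X_sub_C, zero_add]
    linear_combination mul_nonneg (hp.nonneg 0) (hp.nonneg j) +
      mul_nonneg hs (mul_nonneg (hp.nonneg 1) (hp.nonneg j)) + r ^ 2 * hp.outer_le_inner 0 j hij
  · obtain ⟨j, rfl⟩ : ∃ j', j = j' + 1 := ⟨j - 1, by omega⟩
    simp only [Polynomial.coeff_mul_X_sub_C]
    linear_combination hp.outer_le_inner i j (by omega) +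
      mul_le_mul_of_nonneg_left (hp.outer_le_inner_two (by omega : i ≤ j)) hs +
      r ^ 2 * hp.outer_le_inner (i + 1) (j + 1) (by omega)

lemma coeff_C_mul_prod_X_sub_C {c : R} (hc : 0 ≤ c) {m : Multiset R} (hm : ∀ r ∈ m, r ≤ 0) :
    IsPF2 (C c * (m.map (X - C ·)).prod).coeff := by
  induction m using Multiset.induction_on with
  | empty => simpa using coeff_C hc
  | cons r m ih =>
    rw [Multiset.map_cons, Multiset.prod_cons, mul_left_comm, mul_comm]
    exact (ih fun s hs => hm s (Multiset.mem_cons_of_mem hs)).coeff_mul_X_sub_C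
      (hm r (Multiset.mem_cons_self r m))

/-- Once `a` drops at `T` we have `a T > 0`, and `a T * a (k + 1) ≤ a (T + 1) * a k` for `k > T`
keeps it dropping. -/
lemma exists_unimodal {a : ℕ → R} (ha : IsPF2 a) (N : ℕ) (hN : ∀ k, N ≤ k → a k = 0) :
    ∃ T, (∀ k, k < T → a k ≤ a (k + 1)) ∧ ∀ k, T ≤ k → a (k + 1) ≤ a k := by
  by_cases hmono : ∀ k, a k ≤ a (k + 1)
  · exact ⟨N, fun k _ => hmono k, fun k hk => (hN (k + 1) (by omega)).symm ▸ ha.nonneg k⟩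
  push Not at hmono
  set T := Nat.find hmono
  have hdrop : a (T + 1) < a T := Nat.find_spec hmono
  have hT : 0 < a T := (ha.nonneg _).trans_lt hdrop
  refine ⟨T, fun k hk => not_lt.1 (Nat.find_min hmono hk), fun k hk => ?_⟩
  rcases hk.eq_or_lt with rfl | hlt
  · exact hdrop.le
  obtain ⟨j, rfl⟩ := Nat.exists_eq_add_of_lt hlt
  refine le_of_mul_le_mul_left ?_ hT
  calc a T * a (T + j + 1 + 1) ≤ a (T + 1) * a (T + j + 1) :=
        ha.outer_le_inner T (T + j) (Nat.le_add_right T j)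
    _ ≤ a T * a (T + j + 1) := mul_le_mul_of_nonneg_right hdrop.le (ha.nonneg _)

end IsPF2

lemma Polynomial.nonpos_of_isRoot_of_coeff_nonneg {R : Type*} [CommRing R] [LinearOrder R]
    [IsStrictOrderedRing R] {f : R[X]} (hf : f ≠ 0) (h0 : ∀ k, 0 ≤ f.coeff k) {r : R}
    (hr : f.IsRoot r) : r ≤ 0 := by
  by_contra! hpos
  refine absurd hr (ne_of_gt ?_)
  rw [eval_eq_sum_range]
  refine Finset.sum_pos' (fun i _ => mul_nonneg (h0 i) (pow_nonneg hpos.le i)) ?_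
  exact ⟨f.natDegree, Finset.self_mem_range_succ _, mul_pos
    ((h0 _).lt_of_ne' (leadingCoeff_ne_zero.2 hf)) (pow_pos hpos _)⟩

lemma Polynomial.splits_of_forall_isRoot_map_complex_im_eq_zero {f : ℝ[X]}
    (hrr : ∀ z : ℂ, (f.map (algebraMap ℝ ℂ)).IsRoot z → z.im = 0) : f.Splits :=
  .of_splits_map_of_injective (algebraMap ℝ ℂ).injective (IsAlgClosed.splits _)
    fun z hz => ⟨z.re, Complex.ext rfl (hrr z (isRoot_of_mem_roots hz)).symm⟩

theorem realRooted_unimodal (f : Polynomial ℝ)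
    (h0 : ∀ k, 0 ≤ f.coeff k)
    (hrr : ∀ z : ℂ, (f.map (algebraMap ℝ ℂ)).IsRoot z → z.im = 0) :
    ∃ T, (∀ k, k < T → f.coeff k ≤ f.coeff (k + 1)) ∧
      (∀ k, T ≤ k → f.coeff (k + 1) ≤ f.coeff k) := by
  have hroots (r : ℝ) (hr : r ∈ f.roots) : r ≤ 0 :=
    nonpos_of_isRoot_of_coeff_nonneg (mem_roots'.1 hr).1 h0 (mem_roots'.1 hr).2
  have hpf : IsPF2 f.coeff := by
    rw [(splits_of_forall_isRoot_map_complex_im_eq_zero hrr).eq_prod_roots]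
    exact IsPF2.coeff_C_mul_prod_X_sub_C (h0 _) hroots
  exact hpf.exists_unimodal (f.natDegree + 1) fun k hk => coeff_eq_zero_of_natDegree_lt hk
end

section
/- For any n, a real polynomial f of degree at most n is palindromic with center n/2 (i.e., a_k = a_{n-k} for all k) if and only if there exist unique real numbers γ_0, ..., γ_{⌊n/2⌋} such that f(X) = Σ_{k=0}^{⌊n/2⌋} γ_k X^k (1+X)^{n-2k}. -/
open Polynomial Finset

private lemma coeff_basis (m k j : ℕ) :
    ((X:ℝ[X])^k * (1+X)^m).coeff j =
      if k ≤ j then (m.choose (j-k) : ℝ) else 0 := by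
  rw [mul_comm, Polynomial.coeff_mul_X_pow']
  by_cases h : k ≤ j <;> simp [h, Polynomial.coeff_one_add_X_pow]

noncomputable def Tsum (n : ℕ) (γ : Fin (n/2+1) → ℝ) (j : ℕ) : ℝ :=
  ∑ k : Fin (n/2+1), γ k * (if (k:ℕ) ≤ j then ((n - 2*(k:ℕ)).choose (j - k) : ℝ) else 0)

private lemma coeff_gsum (n : ℕ) (γ : Fin (n/2+1) → ℝ) (j : ℕ) :
    (∑ k : Fin (n/2+1), Polynomial.C (γ k) * X^(k:ℕ) * (1+X)^(n - 2*(k:ℕ))).coeff j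
      = Tsum n γ j := by
  rw [Polynomial.finset_sum_coeff]
  simp only [mul_assoc, Polynomial.coeff_C_mul, coeff_basis, Tsum]

private lemma Tsum_symm (n : ℕ) (γ : Fin (n/2+1) → ℝ) {j : ℕ} (hj : j ≤ n) :
    Tsum n γ j = Tsum n γ (n - j) := by
  unfold Tsum
  refine Finset.sum_congr rfl fun k _ => ?_
  have hk : 2 * (k:ℕ) ≤ n := by have := k.isLt; omega
  congr 1
  by_cases h1 : (k:ℕ) ≤ j <;> by_cases h2 : (k:ℕ) ≤ n - j <;> simp only [h1, h2, if_true, if_false]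
  · have h3 : j - k ≤ n - 2*(k:ℕ) := by omega
    rw [← Nat.choose_symm h3]
    have : n - 2*(k:ℕ) - (j - (k:ℕ)) = n - j - (k:ℕ) := by omega
    rw [this]
  · have : n - 2*(k:ℕ) < j - k := by omega
    rw [Nat.choose_eq_zero_of_lt this]; simp
  · have : n - 2*(k:ℕ) < n - j - k := by omega
    rw [Nat.choose_eq_zero_of_lt this]; simp

private lemma Tsum_inj (n : ℕ) (γ γ' : Fin (n/2+1) → ℝ)
    (h : ∀ j, j ≤ n/2 → Tsum n γ j = Tsum n γ' j) : γ = γ' := by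
  have key : ∀ m : ℕ, ∀ j : Fin (n/2+1), (j:ℕ) = m → γ j = γ' j := by
    intro m
    induction m using Nat.strong_induction_on with
    | _ m ih =>
      intro j hjm
      have hj := h j (by have := j.isLt; omega)
      unfold Tsum at hj
      have hz : ∑ k : Fin (n/2+1), (γ k - γ' k) *
          (if (k:ℕ) ≤ (j:ℕ) then ((n - 2*(k:ℕ)).choose ((j:ℕ) - k) : ℝ) else 0) = 0 := by
        simp only [sub_mul, Finset.sum_sub_distrib, hj, sub_self]
      rw [Finset.sum_eq_single j] at hz
      · simpa [sub_eq_zero] using hz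
      · intro b _ hb
        rcases lt_or_gt_of_ne (fun hv => hb (Fin.ext hv) : (b:ℕ) ≠ (j:ℕ)) with hlt | hgt
        · rw [ih (b:ℕ) (by omega) b rfl, sub_self, zero_mul]
        · rw [if_neg (by omega), mul_zero]
      · intro hmem; exact absurd (Finset.mem_univ j) hmem
  funext j; exact key (j:ℕ) j rfl

noncomputable def gam (n : ℕ) (f : Polynomial ℝ) : ℕ → ℝ
  | j => f.coeff j - ∑ k ∈ (Finset.range j).attach,
      gam n f k.1 * (((n - 2*k.1).choose (j - k.1) : ℕ) : ℝ)
  termination_by j => j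
  decreasing_by exact Finset.mem_range.mp k.2

private lemma gam_def (n : ℕ) (f : Polynomial ℝ) (j : ℕ) :
    gam n f j = f.coeff j - ∑ k ∈ Finset.range j,
      gam n f k * (((n - 2*k).choose (j - k) : ℕ) : ℝ) := by
  rw [gam, ← Finset.sum_attach (Finset.range j) (fun k => gam n f k * (((n - 2*k).choose (j - k) : ℕ) : ℝ))]

private lemma Tsum_gam (n : ℕ) (f : Polynomial ℝ) {j : ℕ} (hj : j ≤ n/2) :
    Tsum n (fun k => gam n f (k:ℕ)) j = f.coeff j := by
  unfold Tsum
  rw [Fin.sum_univ_eq_sum_range (fun k => gam n f k * (if k ≤ j then ((n - 2*k).choose (j - k) : ℝ) else 0))]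
  rw [← Finset.sum_subset (Finset.range_subset_range.mpr (by omega : j + 1 ≤ n/2 + 1))
      (fun x hx hnx => by
        rw [if_neg (by simp only [Finset.mem_range] at hx hnx; omega), mul_zero])]
  rw [Finset.sum_range_succ, if_pos le_rfl, Nat.sub_self, Nat.choose_zero_right,
    Nat.cast_one, mul_one, gam_def]
  have : ∀ k ∈ Finset.range j, gam n f k * (if k ≤ j then ((n - 2*k).choose (j - k) : ℝ) else 0)
      = gam n f k * (((n - 2*k).choose (j - k) : ℕ) : ℝ) := by
    intro k hk
    rw [if_pos (by simp only [Finset.mem_range] at hk; omega)]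
  rw [Finset.sum_congr rfl this]
  ring

open Polynomial in
theorem palindromic_iff_gamma (n : ℕ) (f : Polynomial ℝ) (hf : f.natDegree ≤ n) :
    (∀ k ≤ n, f.coeff k = f.coeff (n - k)) ↔
      ∃! γ : Fin (n / 2 + 1) → ℝ,
        f = ∑ k : Fin (n / 2 + 1), Polynomial.C (γ k) * X ^ (k : ℕ) * (1 + X) ^ (n - 2 * k) := by
  constructor
  · intro hpal
    refine ⟨fun k => gam n f (k:ℕ), ?_, ?_⟩
    · ext j
      rw [coeff_gsum]
      by_cases h1 : j ≤ n/2
      · rw [Tsum_gam n f h1]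
      · by_cases h2 : j ≤ n
        · rw [Tsum_symm n _ h2, Tsum_gam n f (by omega : n - j ≤ n/2)]
          exact hpal j h2
        · rw [Polynomial.coeff_eq_zero_of_natDegree_lt (lt_of_le_of_lt hf (by omega))]
          symm
          refine Finset.sum_eq_zero fun k _ => ?_
          have hk : 2 * (k:ℕ) ≤ n := by have := k.isLt; omega
          by_cases h3 : (k:ℕ) ≤ j
          · rw [if_pos h3, Nat.choose_eq_zero_of_lt (by omega)]; simp
          · rw [if_neg h3, mul_zero]
    · intro γ' hγ'
      refine Tsum_inj n γ' _ fun j hj => ?_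
      rw [← coeff_gsum n γ' j, ← hγ', Tsum_gam n f hj]
  · rintro ⟨γ, hγ, -⟩ k hk
    rw [hγ, coeff_gsum, coeff_gsum, Tsum_symm n γ hk]
end

section
/- (Boros–Moll unimodality test) If f(X) = a_0 + a_1 X + ... + a_n X^n is a real polynomial with 0 ≤ a_0 ≤ a_1 ≤ ... ≤ a_n, then the polynomial f(X+1) is unimodal. -/
open Polynomial Finset

private lemma bm_choose_down {j k : ℕ} (h : j ≤ 2*k+1) : j.choose (k+1) ≤ j.choose k := by
  have h1 := Nat.choose_succ_right_eq j k
  have h2 : j - k ≤ k + 1 := by omega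
  have h3 : j.choose (k+1) * (k+1) ≤ j.choose k * (k+1) := by
    rw [h1]; exact Nat.mul_le_mul (le_refl _) h2
  exact Nat.le_of_mul_le_mul_right h3 (Nat.succ_pos k)

private lemma bm_choose_up {N r : ℕ} (h : 2*r+1 ≤ N) : N.choose r ≤ N.choose (r+1) := by
  have h1 := Nat.choose_succ_right_eq N r
  have h2 : r + 1 ≤ N - r := by omega
  have h3 : N.choose r * (r+1) ≤ N.choose (r+1) * (r+1) := by
    rw [h1]; exact Nat.mul_le_mul (le_refl _) h2
  exact Nat.le_of_mul_le_mul_right h3 (Nat.succ_pos r)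

private lemma bm_hockey (r : ℕ) : ∀ M, ∑ j ∈ Finset.range M, ((j.choose r : ℝ)) = ((M.choose (r+1) : ℝ)) := by
  intro M
  induction M with
  | zero => simp
  | succ M ih =>
      rw [Finset.sum_range_succ, ih, Nat.choose_succ_succ']
      push_cast; ring

private lemma bm_coeff (f : Polynomial ℝ) (k : ℕ) :
    (f.comp (X + 1)).coeff k = ∑ j ∈ Finset.range (f.natDegree + 1), f.coeff j * (j.choose k : ℝ) := by
  have hs := Polynomial.sum_over_range (p := f)
    (f := fun e (c : ℝ) => (Polynomial.C c * (X + 1) ^ e).coeff k) (fun m => by simp)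
  rw [Polynomial.comp_eq_sum_left, Polynomial.coeff_sum, hs]
  simp [Polynomial.coeff_C_mul, Polynomial.coeff_X_add_one_pow]

open Polynomial in
theorem boros_moll (f : Polynomial ℝ)
    (h0 : 0 ≤ f.coeff 0)
    (hmono : ∀ k, k < f.natDegree → f.coeff k ≤ f.coeff (k + 1)) :
    ∃ T, (∀ k, k < T → (f.comp (X + 1)).coeff k ≤ (f.comp (X + 1)).coeff (k + 1)) ∧
      (∀ k, T ≤ k → (f.comp (X + 1)).coeff (k + 1) ≤ (f.comp (X + 1)).coeff k) := by
  set n := f.natDegree with hn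
  set a : ℕ → ℝ := fun j => f.coeff j with ha
  have hmono' : ∀ i j, i ≤ j → j ≤ n → a i ≤ a j := by
    intro i j
    induction j with
    | zero => intro hij _; have h : i = 0 := Nat.le_zero.mp hij; rw [h]
    | succ j ih =>
        intro hij hjn
        rcases Nat.lt_or_ge i (j+1) with h | h
        · exact le_trans (ih (by omega) (by omega)) (hmono j (by omega))
        · have h2 : i = j + 1 := by omega
          rw [h2]
  have hmono'' : ∀ i j, i ≤ j → j ≤ n → a i ≤ a j := by
    intro i j hij hjn
    exact hmono' i j hij hjn
  have hpos : ∀ j, 0 ≤ a j := by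
    intro j
    rcases le_or_gt j n with h | h
    · exact le_trans h0 (hmono'' 0 j (Nat.zero_le _) h)
    · have : a j = 0 := Polynomial.coeff_eq_zero_of_natDegree_lt h
      rw [this]
  have hb : ∀ k, (f.comp (X + 1)).coeff k = ∑ j ∈ Finset.range (n + 1), a j * (j.choose k : ℝ) :=
    fun k => bm_coeff f k
  refine ⟨n / 2, ?_, ?_⟩
  · -- increasing part: k < n/2
    intro k hk
    have h2k : 2 * k + 2 ≤ n := by omega
    rw [hb, hb]
    set d : ℕ → ℝ := fun j => (j.choose (k+1) : ℝ) - (j.choose k : ℝ) with hd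
    have hG : ∀ M, (∑ j ∈ Finset.range M, d j) = (M.choose (k+2) : ℝ) - (M.choose (k+1) : ℝ) := by
      intro M
      simp only [hd, Finset.sum_sub_distrib]
      rw [bm_hockey (k+1) M, bm_hockey k M]
    have hGtop : 0 ≤ ∑ j ∈ Finset.range (n+1), d j := by
      rw [hG]
      have : (n+1).choose (k+1) ≤ (n+1).choose (k+2) := bm_choose_up (by omega)
      have := (Nat.cast_le (α := ℝ)).mpr this
      linarith
    have hGle : ∀ m, m ≤ n + 1 → (∑ j ∈ Finset.range m, d j) ≤ ∑ j ∈ Finset.range (n+1), d j := by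
      intro m hm
      rcases le_or_gt m (2*k+2) with h | h
      · have hneg : (∑ j ∈ Finset.range m, d j) ≤ 0 := by
          rw [hG]
          have : m.choose (k+2) ≤ m.choose (k+1) := by
            have := bm_choose_down (j := m) (k := k+1) (by omega)
            simpa using this
          have := (Nat.cast_le (α := ℝ)).mpr this
          linarith
        linarith
      · have hsub : (∑ j ∈ Finset.Ico m (n+1), d j)
            = (∑ j ∈ Finset.range (n+1), d j) - ∑ j ∈ Finset.range m, d j :=
          Finset.sum_Ico_eq_sub _ hm
        have hnn : 0 ≤ ∑ j ∈ Finset.Ico m (n+1), d j := by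
          apply Finset.sum_nonneg
          intro j hj
          simp only [Finset.mem_Ico] at hj
          have : j.choose k ≤ j.choose (k+1) := bm_choose_up (by omega)
          have := (Nat.cast_le (α := ℝ)).mpr this
          simp only [hd]
          linarith
        linarith
    -- Abel summation
    have habel := Finset.sum_range_by_parts a d (n+1)
    simp only [smul_eq_mul, Nat.add_sub_cancel] at habel
    have hbound : (∑ i ∈ Finset.range n, (a (i+1) - a i) * ∑ j ∈ Finset.range (i+1), d j)
        ≤ ∑ i ∈ Finset.range n, (a (i+1) - a i) * ∑ j ∈ Finset.range (n+1), d j := by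
      apply Finset.sum_le_sum
      intro i hi
      simp only [Finset.mem_range] at hi
      have h1 : 0 ≤ a (i+1) - a i := by
        have := hmono i (by omega)
        simp only [ha]
        linarith [this]
      exact mul_le_mul_of_nonneg_left (hGle (i+1) (by omega)) h1
    have htel : (∑ i ∈ Finset.range n, (a (i+1) - a i) * ∑ j ∈ Finset.range (n+1), d j)
        = (a n - a 0) * ∑ j ∈ Finset.range (n+1), d j := by
      rw [← Finset.sum_mul, Finset.sum_range_sub]
    have hsumd : 0 ≤ ∑ i ∈ Finset.range (n+1), a i * d i := by
      rw [habel]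
      have h1 : a 0 * (∑ j ∈ Finset.range (n+1), d j) ≥ 0 := mul_nonneg (hpos 0) hGtop
      calc (0:ℝ) ≤ a 0 * ∑ j ∈ Finset.range (n+1), d j := h1
        _ = a n * (∑ j ∈ Finset.range (n+1), d j)
              - (a n - a 0) * ∑ j ∈ Finset.range (n+1), d j := by ring
        _ ≤ a n * (∑ j ∈ Finset.range (n+1), d j)
              - ∑ i ∈ Finset.range n, (a (i+1) - a i) * ∑ j ∈ Finset.range (i+1), d j := by
            rw [← htel] at *
            linarith [hbound]
    have hfinal : (∑ i ∈ Finset.range (n+1), a i * d i)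
        = (∑ j ∈ Finset.range (n + 1), a j * (j.choose (k+1) : ℝ))
          - ∑ j ∈ Finset.range (n + 1), a j * (j.choose k : ℝ) := by
      rw [← Finset.sum_sub_distrib]
      apply Finset.sum_congr rfl
      intro j _
      simp only [hd]
      ring
    rw [hfinal] at hsumd
    linarith
  · -- decreasing part: n/2 ≤ k
    intro k hk
    rw [hb, hb]
    apply Finset.sum_le_sum
    intro j hj
    simp only [Finset.mem_range] at hj
    have hjk : j ≤ 2 * k + 1 := by omega
    have := bm_choose_down (j := j) (k := k) hjk
    have hc := (Nat.cast_le (α := ℝ)).mpr this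
    exact mul_le_mul_of_nonneg_left hc (hpos j)
end

section
/- (DeTemple–Robertson) For positive integers a, b and n with n ≡ a + b (mod 2) and n ≥ a + b, the number of lattice paths of length n in ℤ² from (0,0) to (a,b) with unit steps in the four directions (±1,0), (0,±1) equals C(n, (n+a−b)/2) · C(n, (n−a−b)/2). -/
open Finset

section Path

variable {M : Type*} [AddCommGroup M]

private def pSum (n : ℕ) (ε : Fin n → M) : Fin (n + 1) → M :=
  fun j => ∑ k : Fin n, if (k : ℕ) < (j : ℕ) then ε k else 0

private lemma pSum_zero (n : ℕ) (ε : Fin n → M) : pSum n ε 0 = 0 := by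
  unfold pSum; simp

private lemma pSum_last (n : ℕ) (ε : Fin n → M) : pSum n ε (Fin.last n) = ∑ k, ε k := by
  unfold pSum
  refine Finset.sum_congr rfl fun k _ => ?_
  rw [if_pos]
  exact k.isLt

private lemma pSum_step (n : ℕ) (ε : Fin n → M) (k : Fin n) :
    pSum n ε k.succ - pSum n ε k.castSucc = ε k := by
  unfold pSum
  rw [← Finset.sum_sub_distrib]
  rw [Finset.sum_eq_single_of_mem k (Finset.mem_univ k)]
  · simp [Fin.val_succ]
  · intro j _ hj
    have hne : (j : ℕ) ≠ (k : ℕ) := fun h => hj (Fin.ext h)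
    simp only [Fin.val_succ, Fin.coe_castSucc]
    by_cases h : (j : ℕ) < (k : ℕ)
    · rw [if_pos (by omega), if_pos h, sub_self]
    · rw [if_neg (by omega), if_neg h, sub_self]

private lemma tele (n : ℕ) (v : Fin (n + 1) → M) :
    ∑ k : Fin n, (v k.succ - v k.castSucc) = v (Fin.last n) - v 0 := by
  have hf : ∀ i : ℕ, min i n < n + 1 := fun i => Nat.lt_succ_of_le (min_le_right _ _)
  set f : ℕ → M := fun i => v ⟨min i n, hf i⟩ with hfdef
  have h1 : ∑ k : Fin n, (v k.succ - v k.castSucc) = ∑ i ∈ Finset.range n, (f (i + 1) - f i) := by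
    rw [Finset.sum_range (fun i => f (i + 1) - f i)]
    refine Finset.sum_congr rfl fun k _ => ?_
    have e1 : (⟨min ((k : ℕ) + 1) n, hf _⟩ : Fin (n + 1)) = k.succ := by
      apply Fin.ext; simp only [Fin.val_succ]; omega
    have e2 : (⟨min (k : ℕ) n, hf _⟩ : Fin (n + 1)) = k.castSucc := by
      apply Fin.ext; simp only [Fin.coe_castSucc]; omega
    simp only [hfdef, e1, e2]
  rw [h1, Finset.sum_range_sub f n]
  have e3 : (⟨min n n, hf n⟩ : Fin (n + 1)) = Fin.last n := by
    apply Fin.ext; simp [Fin.val_last]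
  have e4 : (⟨min 0 n, hf 0⟩ : Fin (n + 1)) = 0 := by
    apply Fin.ext; simp
  simp only [hfdef, e3, e4]

/-- A path from 0 to t is equivalent to its sequence of steps. -/
private def pathEquiv (n : ℕ) (t : M) (P : M → Prop) :
    {v : Fin (n + 1) → M // v 0 = 0 ∧ v (Fin.last n) = t ∧
      ∀ k : Fin n, P (v k.succ - v k.castSucc)} ≃
    {ε : Fin n → M // (∀ k, P (ε k)) ∧ ∑ k, ε k = t} where
  toFun v := ⟨fun k => v.1 k.succ - v.1 k.castSucc, v.2.2.2, by
    show ∑ k : Fin n, (v.1 k.succ - v.1 k.castSucc) = t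
    rw [tele, v.2.1, v.2.2.1, sub_zero]⟩
  invFun ε := ⟨pSum n ε.1, pSum_zero n ε.1, by rw [pSum_last, ε.2.2],
    fun k => by rw [pSum_step]; exact ε.2.1 k⟩
  left_inv v := by
    apply Subtype.ext
    funext j
    show pSum n (fun k => v.1 k.succ - v.1 k.castSucc) j = v.1 j
    induction j using Fin.induction with
    | zero => rw [pSum_zero, v.2.1]
    | succ i ih =>
        have hstep := pSum_step n (fun k => v.1 k.succ - v.1 k.castSucc) i
        have h2 : pSum n (fun k => v.1 k.succ - v.1 k.castSucc) i.succ
            = pSum n (fun k => v.1 k.succ - v.1 k.castSucc) i.castSucc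
              + (v.1 i.succ - v.1 i.castSucc) := by
          rw [← hstep]; abel
        rw [h2, ih]; abel
  right_inv ε := Subtype.ext (funext fun k => pSum_step n ε.1 k)

end Path

private def S4 : Set (ℤ × ℤ) := {(1, 0), (-1, 0), (0, 1), (0, -1)}
private def T2 : Set ℤ := {1, -1}

private lemma memS4 {p : ℤ × ℤ} (h : p ∈ S4) :
    p = (1, 0) ∨ p = (-1, 0) ∨ p = (0, 1) ∨ p = (0, -1) := by
  simpa [S4, Set.mem_insert_iff, Set.mem_singleton_iff] using h

private lemma memT2 {x : ℤ} (h : x ∈ T2) : x = 1 ∨ x = -1 := by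
  simpa [T2, Set.mem_insert_iff, Set.mem_singleton_iff] using h

/-- Splitting 2D steps into two independent 1D step sequences. -/
private def stepEquiv (n : ℕ) (a b : ℤ) :
    {ε : Fin n → ℤ × ℤ // (∀ k, ε k ∈ S4) ∧ ∑ k, ε k = (a, b)} ≃
    {u : Fin n → ℤ // (∀ k, u k ∈ T2) ∧ ∑ k, u k = a + b} ×
    {w : Fin n → ℤ // (∀ k, w k ∈ T2) ∧ ∑ k, w k = a - b} where
  toFun ε := by
    refine ⟨⟨fun k => (ε.1 k).1 + (ε.1 k).2, ?_, ?_⟩,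
            ⟨fun k => (ε.1 k).1 - (ε.1 k).2, ?_, ?_⟩⟩
    · intro k
      rcases memS4 (ε.2.1 k) with h | h | h | h <;> norm_num [T2, h]
    · show ∑ k : Fin n, ((ε.1 k).1 + (ε.1 k).2) = a + b
      rw [Finset.sum_add_distrib, ← Prod.fst_sum, ← Prod.snd_sum, ε.2.2]
    · intro k
      rcases memS4 (ε.2.1 k) with h | h | h | h <;> norm_num [T2, h]
    · show ∑ k : Fin n, ((ε.1 k).1 - (ε.1 k).2) = a - b
      rw [Finset.sum_sub_distrib, ← Prod.fst_sum, ← Prod.snd_sum, ε.2.2]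
  invFun uw := by
    refine ⟨fun k => ((uw.1.1 k + uw.2.1 k) / 2, (uw.1.1 k - uw.2.1 k) / 2), ?_, ?_⟩
    · intro k
      rcases memT2 (uw.1.2.1 k) with h1 | h1 <;> rcases memT2 (uw.2.2.1 k) with h2 | h2 <;>
        norm_num [S4, h1, h2, Prod.ext_iff]
    · have key : ∀ k : Fin n,
          (2 : ℤ) • (((uw.1.1 k + uw.2.1 k) / 2, (uw.1.1 k - uw.2.1 k) / 2) : ℤ × ℤ)
          = (uw.1.1 k + uw.2.1 k, uw.1.1 k - uw.2.1 k) := by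
        intro k
        rcases memT2 (uw.1.2.1 k) with h1 | h1 <;> rcases memT2 (uw.2.2.1 k) with h2 | h2 <;>
          norm_num [h1, h2, Prod.ext_iff, Prod.smul_def]
      have h2 : (2 : ℤ) • ∑ k : Fin n,
          (((uw.1.1 k + uw.2.1 k) / 2, (uw.1.1 k - uw.2.1 k) / 2) : ℤ × ℤ)
          = (2 : ℤ) • ((a, b) : ℤ × ℤ) := by
        rw [Finset.smul_sum]
        simp only [key]
        have hs : ∑ k : Fin n, ((uw.1.1 k + uw.2.1 k, uw.1.1 k - uw.2.1 k) : ℤ × ℤ)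
            = (∑ k, uw.1.1 k + ∑ k, uw.2.1 k, ∑ k, uw.1.1 k - ∑ k, uw.2.1 k) := by
          apply Prod.ext
          · rw [Prod.fst_sum]; simp [Finset.sum_add_distrib]
          · rw [Prod.snd_sum]; simp [Finset.sum_sub_distrib]
        rw [hs, uw.1.2.2, uw.2.2.2]
        apply Prod.ext <;> simp [Prod.smul_def] <;> ring
      exact smul_right_injective (ℤ × ℤ) (by norm_num) h2
  left_inv ε := by
    apply Subtype.ext
    funext k
    show ((((ε.1 k).1 + (ε.1 k).2) + ((ε.1 k).1 - (ε.1 k).2)) / 2,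
          (((ε.1 k).1 + (ε.1 k).2) - ((ε.1 k).1 - (ε.1 k).2)) / 2) = ε.1 k
    rcases memS4 (ε.2.1 k) with h | h | h | h <;> norm_num [h, Prod.ext_iff]
  right_inv uw := by
    apply Prod.ext <;> apply Subtype.ext <;> funext k
    · show ((uw.1.1 k + uw.2.1 k) / 2) + ((uw.1.1 k - uw.2.1 k) / 2) = uw.1.1 k
      rcases memT2 (uw.1.2.1 k) with h1 | h1 <;> rcases memT2 (uw.2.2.1 k) with h2 | h2 <;>
        norm_num [h1, h2]
    · show ((uw.1.1 k + uw.2.1 k) / 2) - ((uw.1.1 k - uw.2.1 k) / 2) = uw.2.1 k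
      rcases memT2 (uw.1.2.1 k) with h1 | h1 <;> rcases memT2 (uw.2.2.1 k) with h2 | h2 <;>
        norm_num [h1, h2]

/-- ±1 sequences with given sum correspond to subsets of given size. -/
private def signEquiv (n : ℕ) (s : ℤ) (k : ℕ) (hk : (n : ℤ) + s = 2 * k) :
    {u : Fin n → ℤ // (∀ j, u j ∈ T2) ∧ ∑ j, u j = s} ≃
    {A : Finset (Fin n) // A.card = k} where
  toFun u := by
    refine ⟨Finset.univ.filter (fun j => u.1 j = 1), ?_⟩
    have hsplit : (Finset.univ.filter (fun j => u.1 j = 1)).card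
        + (Finset.univ.filter (fun j => ¬ u.1 j = 1)).card = n := by
      rw [Finset.card_filter_add_card_filter_not]
      simp
    have hA1 : ∑ j ∈ Finset.univ.filter (fun j => u.1 j = 1), u.1 j
        = ((Finset.univ.filter (fun j => u.1 j = 1)).card : ℤ) := by
      rw [Finset.sum_congr rfl (fun j hj => (Finset.mem_filter.mp hj).2)]
      simp
    have hB1 : ∑ j ∈ Finset.univ.filter (fun j => ¬ u.1 j = 1), u.1 j
        = -(((Finset.univ.filter (fun j => ¬ u.1 j = 1)).card : ℤ)) := by
      have hall : ∀ j ∈ Finset.univ.filter (fun j => ¬ u.1 j = 1), u.1 j = -1 := by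
        intro j hj
        have hT := memT2 (u.2.1 j)
        have hne := (Finset.mem_filter.mp hj).2
        tauto
      rw [Finset.sum_congr rfl hall]
      simp
    have hsum : ((Finset.univ.filter (fun j => u.1 j = 1)).card : ℤ)
        + (-((Finset.univ.filter (fun j => ¬ u.1 j = 1)).card : ℤ)) = s := by
      rw [← hA1, ← hB1,
        Finset.sum_filter_add_sum_filter_not Finset.univ (fun j => u.1 j = 1) u.1, u.2.2]
    omega
  invFun A := by
    refine ⟨fun j => if j ∈ A.1 then 1 else -1, fun j => ?_, ?_⟩
    · by_cases h : j ∈ A.1 <;> simp [T2, h]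
    · show ∑ j : Fin n, (if j ∈ A.1 then (1 : ℤ) else -1) = s
      have hcongr : ∀ j ∈ Finset.univ, (if j ∈ A.1 then (1 : ℤ) else -1)
          = 2 * (if j ∈ A.1 then 1 else 0) - 1 := fun j _ => by split <;> ring
      rw [Finset.sum_congr rfl hcongr, Finset.sum_sub_distrib, ← Finset.mul_sum,
        Finset.sum_ite_mem, Finset.univ_inter, Finset.sum_const, Finset.sum_const, A.2]
      simp only [Finset.card_univ, Fintype.card_fin, nsmul_eq_mul, mul_one]
      omega
  left_inv u := by
    apply Subtype.ext
    funext j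
    show (if j ∈ Finset.univ.filter (fun j => u.1 j = 1) then (1 : ℤ) else -1) = u.1 j
    by_cases h : u.1 j = 1
    · simp [h]
    · have hT := memT2 (u.2.1 j)
      have h' : u.1 j = -1 := by tauto
      simp [h, h']
  right_inv A := by
    apply Subtype.ext
    ext j
    by_cases h : j ∈ A.1 <;> simp [h]

theorem detemple_robertson (a b n : ℕ) (ha : 0 < a) (hb : 0 < b)
    (hpar : n % 2 = (a + b) % 2) (hn : a + b ≤ n) :
    Nat.card {v : Fin (n + 1) → ℤ × ℤ //
        v 0 = (0, 0) ∧ v (Fin.last n) = ((a : ℤ), (b : ℤ)) ∧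
        ∀ k : Fin n, v k.succ - v k.castSucc ∈
          ({(1, 0), (-1, 0), (0, 1), (0, -1)} : Set (ℤ × ℤ))}
      = n.choose ((n + a - b) / 2) * n.choose ((n - a - b) / 2) := by
  obtain ⟨k1, hk1⟩ : ∃ k, n + a + b = 2 * k := ⟨(n + a + b) / 2, by omega⟩
  obtain ⟨k2, hk2⟩ : ∃ k, n + a = b + 2 * k := ⟨(n + a - b) / 2, by omega⟩
  have h1 : (n : ℤ) + ((a : ℤ) + b) = 2 * (k1 : ℤ) := by push_cast; omega
  have h2 : (n : ℤ) + ((a : ℤ) - b) = 2 * (k2 : ℤ) := by push_cast; omega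
  have e := (pathEquiv n ((a : ℤ), (b : ℤ)) (· ∈ S4)).trans
    ((stepEquiv n a b).trans
      (Equiv.prodCongr (signEquiv n ((a : ℤ) + b) k1 h1) (signEquiv n ((a : ℤ) - b) k2 h2)))
  refine Eq.trans (Nat.card_congr e) ?_
  rw [Nat.card_prod, Nat.card_eq_fintype_card, Nat.card_eq_fintype_card]
  simp only [Fintype.card_finset_len, Fintype.card_fin]
  have e1 : (n + a - b) / 2 = k2 := by omega
  have e2 : (n - a - b) / 2 = n - k1 := by omega
  rw [e1, e2, Nat.choose_symm (by omega : k1 ≤ n)]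
  ring
end

section
/- (Sagan) For any positive integer n and 0 ≤ k ≤ n, the sequence (C(n,j) · C(n,k−j)) for j = 0, 1, ..., k is unimodal. -/
lemma sagan_step (n k j : ℕ) (hk : k ≤ n) (h : 2 * j + 1 ≤ k) :
    n.choose j * n.choose (k - j) ≤ n.choose (j + 1) * n.choose (k - (j + 1)) := by
  have hj : j < k := by omega
  have h1 : n.choose (j + 1) * (j + 1) = n.choose j * (n - j) :=
    Nat.choose_succ_right_eq n j
  have h2 : n.choose (k - j) * (k - j) = n.choose (k - (j + 1)) * (n - (k - (j + 1))) := by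
    have he : k - j = (k - (j + 1)) + 1 := by omega
    rw [he, Nat.choose_succ_right_eq]
  have hx : (j + 1) * (n - (k - (j + 1))) ≤ (k - j) * (n - j) :=
    Nat.mul_le_mul (by omega) (Nat.sub_le_sub_left (show j ≤ k - (j + 1) by omega) n)
  have key : n.choose j * n.choose (k - j) * ((j + 1) * (k - j)) ≤
      n.choose (j + 1) * n.choose (k - (j + 1)) * ((j + 1) * (k - j)) := by
    calc n.choose j * n.choose (k - j) * ((j + 1) * (k - j))
        = (n.choose j * n.choose (k - (j + 1))) * ((j + 1) * (n - (k - (j + 1)))) := by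
          have : n.choose j * n.choose (k - j) * ((j + 1) * (k - j)) =
              n.choose j * (j + 1) * (n.choose (k - j) * (k - j)) := by ring
          rw [this, h2]; ring
      _ ≤ (n.choose j * n.choose (k - (j + 1))) * ((k - j) * (n - j)) :=
          Nat.mul_le_mul_left _ hx
      _ = n.choose (j + 1) * n.choose (k - (j + 1)) * ((j + 1) * (k - j)) := by
          have : (n.choose j * n.choose (k - (j + 1))) * ((k - j) * (n - j)) =
              n.choose j * (n - j) * (n.choose (k - (j + 1)) * (k - j)) := by ring
          rw [this, ← h1]; ring
  exact Nat.le_of_mul_le_mul_right key (Nat.mul_pos (by omega) (by omega))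

theorem sagan_unimodal (n k : ℕ) (hn : 0 < n) (hk : k ≤ n) :
    ∃ T ≤ k, (∀ j, j < T → n.choose j * n.choose (k - j) ≤ n.choose (j + 1) * n.choose (k - (j + 1))) ∧
      (∀ j, T ≤ j → j + 1 ≤ k → n.choose (j + 1) * n.choose (k - (j + 1)) ≤ n.choose j * n.choose (k - j)) := by
  refine ⟨k / 2, by omega, ?_, ?_⟩
  · intro j hj
    exact sagan_step n k j hk (by omega)
  · intro j hj hjk
    have h := sagan_step n k (k - j - 1) hk (by omega)
    have e1 : k - (k - j - 1) = j + 1 := by omega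
    have e2 : k - j - 1 + 1 = k - j := by omega
    have e3 : k - (k - j) = j := by omega
    rw [e1, e2, e3] at h
    have e0 : k - (j + 1) = k - j - 1 := by omega
    calc n.choose (j + 1) * n.choose (k - (j + 1))
        = n.choose (k - j - 1) * n.choose (j + 1) := by rw [e0]; ring
      _ ≤ n.choose (k - j) * n.choose j := h
      _ = n.choose j * n.choose (k - j) := by ring
end
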